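/- arXiv:2205.11724 — 2 statements merged into one kernel-verified Lean document; each statement's English description precedes it below -/
import Mathlib

section
/- Let φ : R → S be a ring homomorphism making R a module retract of S, i.e., there exists an R-module homomorphism ψ : S → R with ψ ∘ φ = id_R (viewing S as an R-module via φ). If S is Nil*-Noetherian, then R is Nil*-Noetherian. -/
/-- A commutative ring is Nil*-Noetherian if every nil ideal is finitely generated. -/
def IsNilStarNoetherianRing (R : Type*) [CommRing R] : Prop :=
  ∀ I : Ideal R, I ≤ nilradical R → I.FG

/-!
Push a nil ideal `I` of `R` forward to the nil ideal `I S` of `S`. It is generated by the images of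
finitely many elements `t ⊆ I`, and since `ψ` is `R`-linear, `ψ (s * φ a) = a * ψ s`, so `ψ` maps
`I S` back into `span t`. As `ψ ∘ φ = id`, every `a ∈ I` is `ψ (φ a) ∈ span t`, whence `I = span t`.
-/

section

variable {R S : Type*} [CommRing R] [CommRing S]

theorem Ideal.map_le_nilradical {f : R →+* S} {I : Ideal R} (hI : I ≤ nilradical R) :
    I.map f ≤ nilradical S :=
  calc I.map f ≤ (nilradical R).map f := Ideal.map_mono hI
    _ ≤ ((⊥ : Ideal R).map f).radical := Ideal.map_radical_le f
    _ = nilradical S := by rw [Ideal.map_bot]; rfl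

theorem Ideal.FG.exists_finset_subset_map_eq_span {f : R →+* S} {I : Ideal R}
    (h : (I.map f).FG) : ∃ t : Finset R, ↑t ⊆ (I : Set R) ∧ I.map f = Ideal.span (f '' t) := by
  classical
  obtain ⟨s, hsI, hs⟩ := (Submodule.fg_span_iff_fg_span_finset_subset _).1 h
  obtain ⟨t, htI, rfl⟩ := Finset.subset_set_image_iff.1 hsI
  exact ⟨t, htI, by rw [Finset.coe_image] at hs; exact hs⟩

theorem Ideal.apply_mem_of_mem_map_of_linear {φ : R →+* S} {ψ : S →+ R}
    (hlin : ∀ (r : R) (s : S), ψ (φ r * s) = r * ψ s) {I : Ideal R} {x : S} (hx : x ∈ I.map φ) :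
    ψ x ∈ I := by
  -- `ψ⁻¹(I)` need not be an ideal of `S`; `K` is the largest ideal contained in it.
  let K : Ideal S :=
    { carrier := {y | ∀ s, ψ (s * y) ∈ I}
      add_mem' := fun hy hz s => by rw [mul_add, map_add]; exact add_mem (hy s) (hz s)
      zero_mem' := fun s => by rw [mul_zero, map_zero]; exact zero_mem I
      smul_mem' := fun c y hy s => by rw [smul_eq_mul, ← mul_assoc]; exact hy (s * c) }
  have hIK : I.map φ ≤ K := Ideal.map_le_iff_le_comap.2 fun a ha s => by
    rw [mul_comm, hlin]; exact I.mul_mem_right _ ha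
  simpa using hIK hx 1

end

theorem isNilStarNoetherianRing_of_moduleRetract {R S : Type*} [CommRing R] [CommRing S]
    (φ : R →+* S) (ψ : S →+ R)
    (hlin : ∀ (r : R) (s : S), ψ (φ r * s) = r * ψ s)
    (hretract : ∀ r : R, ψ (φ r) = r)
    (hS : IsNilStarNoetherianRing S) : IsNilStarNoetherianRing R := by
  intro I hI
  obtain ⟨t, htI, ht⟩ :=
    (hS _ (Ideal.map_le_nilradical (f := φ) hI)).exists_finset_subset_map_eq_span
  refine ⟨t, le_antisymm (Ideal.span_le.2 htI) fun a ha => ?_⟩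
  have hφa : φ a ∈ (Ideal.span (t : Set R)).map φ := by
    rw [Ideal.map_span, ← ht]; exact Ideal.mem_map_of_mem φ ha
  simpa only [hretract] using Ideal.apply_mem_of_mem_map_of_linear hlin hφa
end

section
/- A commutative ring R is Nil*-Noetherian if and only if the formal power series ring R[[x]] is Nil*-Noetherian. -/
/-!
If every nil ideal of `R` is finitely generated, the nilradical `N` is a Noetherian `R`-module, so
`R ⧸ ann N` embeds into a finite power of `N` and is a Noetherian ring, hence so is
`(R ⧸ ann N)⟦X⟧`. A nilpotent power series has nilpotent coefficients (its image in the domain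
`(R ⧸ p)⟦X⟧` vanishes for every prime `p`), so every nil ideal of `R⟦X⟧` lies in `N⟦X⟧ = N · R⟦X⟧`.
This is a finitely generated `R⟦X⟧`-module killed by `(ann N)⟦X⟧`, i.e. a finite module over the
Noetherian ring `(R ⧸ ann N)⟦X⟧`, so its submodules are finitely generated. Conversely, a nil
ideal `I` of `R` is the image under the constant coefficient of the nil ideal `I · R⟦X⟧`.
Here `I⟦X⟧` is encoded as the kernel of `PowerSeries.map (Ideal.Quotient.mk I)`.
-/

open PowerSeries

section Annihilator

variable {R M : Type*} [CommRing R] [AddCommGroup M] [Module R M]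

theorem Module.isNoetherianRing_quotient_annihilator [IsNoetherian R M] :
    IsNoetherianRing (R ⧸ Module.annihilator R M) := by
  obtain ⟨s, hs⟩ := Module.Finite.fg_top (R := R) (M := M)
  let φ : R →ₗ[R] (s → M) := LinearMap.pi fun g => LinearMap.toSpanSingleton R M g
  have hker : LinearMap.ker φ = Module.annihilator R M := by
    rw [LinearMap.ker_pi, ← Submodule.annihilator_top, ← hs, Submodule.annihilator_span]
    rfl
  have : IsNoetherian R (R ⧸ Module.annihilator R M) :=
    hker ▸ isNoetherian_of_linearEquiv φ.quotKerEquivRange.symm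
  exact isNoetherian_of_tower R this

theorem isNoetherian_of_surjective_algebraMap (S : Type*) [CommRing S] [Algebra R S] [Module S M]
    [IsScalarTower R S M] (hS : Function.Surjective (algebraMap R S)) [IsNoetherian S M] :
    IsNoetherian R M := by
  refine ⟨fun p => ?_⟩
  have := (IsNoetherian.noetherian (Submodule.span S (p : Set M))).restrictScalars_of_surjective hS
  rwa [Submodule.restrictScalars_span R S hS, Submodule.span_eq] at this

theorem Module.isNoetherian_of_le_annihilator [Module.Finite R M] {K : Ideal R}
    [IsNoetherianRing (R ⧸ K)] (hK : K ≤ Module.annihilator R M) : IsNoetherian R M := by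
  have hM : Module.IsTorsionBySet R M K :=
    (Module.isTorsionBySet_iff_subset_annihilator R M).mpr hK
  let := hM.module
  have := hM.isScalarTower (S := R)
  have := Module.Finite.of_restrictScalars_finite R (R ⧸ K) M
  exact isNoetherian_of_surjective_algebraMap (R ⧸ K) Ideal.Quotient.mk_surjective

end Annihilator

namespace PowerSeries

variable {R : Type*} [CommRing R]

theorem mem_ker_map_mk_iff {I : Ideal R} {f : R⟦X⟧} :
    f ∈ RingHom.ker (map (Ideal.Quotient.mk I)) ↔ ∀ n, coeff n f ∈ I := by
  simp [RingHom.mem_ker, PowerSeries.ext_iff, Ideal.Quotient.eq_zero_iff_mem]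

theorem ker_map_mk_eq_map_C {I : Ideal R} (hI : I.FG) :
    RingHom.ker (map (Ideal.Quotient.mk I)) = I.map C := by
  refine le_antisymm (fun f hf => ?_) (Ideal.map_le_iff_le_comap.mpr fun a ha => ?_)
  · obtain ⟨s, rfl⟩ := hI
    choose c _ hc using fun n => Submodule.mem_span_finset.mp (mem_ker_map_mk_iff.mp hf n)
    have hf_eq : f = ∑ a ∈ s, mk (fun n => c n a) * C a := by
      ext n
      simp [← hc n, map_sum]
    rw [hf_eq]
    exact Ideal.sum_mem _ fun a ha =>
      Ideal.mul_mem_left _ _ (Ideal.mem_map_of_mem _ (Ideal.subset_span ha))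
  · rw [Ideal.mem_comap, mem_ker_map_mk_iff]
    intro n
    rw [coeff_C]
    split_ifs
    exacts [ha, I.zero_mem]

theorem ker_map_mk_mul_ker_map_mk {I J : Ideal R} (hIJ : I * J = ⊥) :
    RingHom.ker (map (Ideal.Quotient.mk I)) * RingHom.ker (map (Ideal.Quotient.mk J)) = ⊥ := by
  refine le_bot_iff.mp (Ideal.mul_le.mpr fun f hf g hg => ?_)
  rw [Ideal.mem_bot, PowerSeries.ext_iff]
  intro n
  rw [coeff_mul, map_zero]
  refine Finset.sum_eq_zero fun p _ => ?_
  rw [← Ideal.mem_bot, ← hIJ]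
  exact Ideal.mul_mem_mul (mem_ker_map_mk_iff.mp hf p.1) (mem_ker_map_mk_iff.mp hg p.2)

theorem nilradical_le_ker_map_mk_nilradical :
    nilradical R⟦X⟧ ≤ RingHom.ker (map (Ideal.Quotient.mk (nilradical R))) := by
  intro f hf
  rw [mem_ker_map_mk_iff]
  intro n
  rw [nilradical_eq_sInf, Submodule.mem_sInf]
  rintro p (hp : Ideal.IsPrime p)
  have h0 : map (Ideal.Quotient.mk p) f = 0 := ((mem_nilradical.mp hf).map _).eq_zero
  simpa [Ideal.Quotient.eq_zero_iff_mem] using congr(coeff n $h0)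

theorem isNoetherian_ker_map_mk (I : Ideal R) [IsNoetherian R I] :
    IsNoetherian R⟦X⟧ (RingHom.ker (map (Ideal.Quotient.mk I))) := by
  have hI : I.FG := Module.Finite.iff_fg.mp inferInstance
  have : Module.Finite R⟦X⟧ (RingHom.ker (map (Ideal.Quotient.mk I))) :=
    Module.Finite.iff_fg.mpr (ker_map_mk_eq_map_C hI ▸ hI.map C)
  have := Module.isNoetherianRing_quotient_annihilator (R := R) (M := I)
  have : IsNoetherianRing (R⟦X⟧ ⧸ RingHom.ker (map (Ideal.Quotient.mk I.annihilator))) :=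
    isNoetherianRing_of_ringEquiv _
      (RingHom.quotientKerEquivOfSurjective (map_surjective _ Ideal.Quotient.mk_surjective)).symm
  exact Module.isNoetherian_of_le_annihilator
    (Submodule.le_annihilator_iff.mpr (ker_map_mk_mul_ker_map_mk (Submodule.annihilator_mul I)))

end PowerSeries

theorem isNilStarNoetherianRing_iff_isNoetherian_nilradical (R : Type*) [CommRing R] :
    IsNilStarNoetherianRing R ↔ IsNoetherian R (nilradical R) :=
  isNoetherian_submodule.symm

theorem isNilStarNoetherianRing_powerSeries_iff (R : Type*) [CommRing R] :
    IsNilStarNoetherianRing R ↔ IsNilStarNoetherianRing (PowerSeries R) := by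
  constructor
  · intro hR J hJ
    have : IsNoetherian R (nilradical R) :=
      (isNilStarNoetherianRing_iff_isNoetherian_nilradical R).mp hR
    exact isNoetherian_submodule.mp (isNoetherian_ker_map_mk (nilradical R)) J
      (hJ.trans nilradical_le_ker_map_mk_nilradical)
  · intro hP I hI
    have hIX : (I.map C).FG := hP _ (Ideal.map_le_iff_le_comap.mpr fun a ha =>
      mem_nilradical.mpr ((mem_nilradical.mp (hI ha)).map C))
    simpa [Ideal.map_map] using hIX.map constantCoeff
end
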